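/- arXiv:1910.14624 — 7 statements merged into one kernel-verified Lean document; each statement's English description precedes it below -/
import Mathlib

section
/- Let E be a vector lattice and V a vector space. If an s-homogeneous polynomial P : E → V has the Hammerstein property, then P is a valuation, i.e., P(x) + P(y) = P(x ∧ y) + P(x ∨ y) for all x, y ∈ E. -/
/-- If an s-homogeneous polynomial `P` (generated by a symmetric s-linear map `T`)
has the Hammerstein property, then `P` is a valuation. -/
theorem stmt1 {E V : Type*} [AddCommGroup E] [Lattice E]
    [CovariantClass E E (· + ·) (· ≤ ·)] [Module ℝ E]
    [AddCommGroup V] [Module ℝ V] (s : ℕ)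
    (T : MultilinearMap ℝ (fun _ : Fin s => E) V)
    (hsymm : ∀ (v : Fin s → E) (σ : Equiv.Perm (Fin s)), T (v ∘ σ) = T v)
    (P : E → V) (hP : ∀ x : E, P x = T (fun _ => x))
    (hH : ∀ x y z : E, |x| ⊓ |y| = 0 → P (x + y + z) - P (x + z) = P (y + z) - P z) :
    ∀ x y : E, P x + P y = P (x ⊓ y) + P (x ⊔ y) := by
  intro x y
  set a := x - x ⊓ y with ha
  set b := y - x ⊓ y with hb
  have ha0 : 0 ≤ a := sub_nonneg.2 inf_le_left
  have hb0 : 0 ≤ b := sub_nonneg.2 inf_le_right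
  have hab : |a| ⊓ |b| = 0 := by
    rw [abs_of_nonneg ha0, abs_of_nonneg hb0, ha, hb, ← inf_sub, sub_self]
  have key := hH a b (x ⊓ y) hab
  have h1 : a + b + x ⊓ y = x ⊔ y := by
    rw [ha, hb]
    have := inf_add_sup x y
    abel_nf
    abel_nf at this
    linear_combination (norm := abel) -this
  have h2 : a + x ⊓ y = x := by rw [ha]; abel
  have h3 : b + x ⊓ y = y := by rw [hb]; abel
  rw [h1, h2, h3] at key
  linear_combination (norm := abel) -key
end

section
/- Let E be a vector lattice, V a vector space, s ≥ 2, and P : E → V an s-homogeneous polynomial such that P restricted to E⁺ has the Hammerstein property. Then for all x, x₁, ..., x_s ∈ E⁺ such that x_i ⊥ x_j for some i ≠ j, the alternating sum Σ_{δ ∈ {0,1}^s} (−1)^{s − Σ δ_i} P(x + Σ δ_i x_i) equals 0. -/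
open scoped BigOperators

lemma sum_upd2 {M : Type*} [AddCommMonoid M] {n : ℕ} {i j : Fin n} (hij : i ≠ j)
    (f : Bool → Fin n → M) (h0 : ∀ k, f false k = 0)
    (d : Fin n → Bool) (hdi : d i = false) (hdj : d j = false) (a b : Bool) :
    ∑ k, f (Function.update (Function.update d i a) j b k) k
      = f a i + f b j + ∑ k, f (d k) k := by
  have h : ∀ k, f (Function.update (Function.update d i a) j b k) k
      = f (d k) k + ((if k = i then f a i else 0) + (if k = j then f b j else 0)) := by
    intro k
    simp only [Function.update_apply]
    split_ifs <;> simp_all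
  simp only [h]
  rw [Finset.sum_add_distrib, Finset.sum_add_distrib, Finset.sum_ite_eq' Finset.univ,
    Finset.sum_ite_eq' Finset.univ]
  simp
  abel

/-- Lemma: if `P` restricted to the positive cone has the Hammerstein property, then
the alternating sum `Σ_{δ ∈ {0,1}^s} (-1)^{s - Σδᵢ} P(x + Σ δᵢ xᵢ)` vanishes whenever
two of the `xᵢ` are disjoint. -/
theorem stmt3 {E V : Type*} [AddCommGroup E] [Lattice E]
    [CovariantClass E E (· + ·) (· ≤ ·)] [Module ℝ E]
    [AddCommGroup V] [Module ℝ V] (s : ℕ) (hs : 2 ≤ s)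
    (T : MultilinearMap ℝ (fun _ : Fin s => E) V)
    (hsymm : ∀ (v : Fin s → E) (σ : Equiv.Perm (Fin s)), T (v ∘ σ) = T v)
    (P : E → V) (hP : ∀ x : E, P x = T (fun _ => x))
    (hH : ∀ x y z : E, 0 ≤ x → 0 ≤ y → 0 ≤ z → x ⊓ y = 0 →
      P (x + y + z) - P (x + z) = P (y + z) - P z) :
    ∀ (x : E) (xs : Fin s → E), 0 ≤ x → (∀ i, 0 ≤ xs i) →
      (∃ i j, i ≠ j ∧ xs i ⊓ xs j = 0) →
      ∑ δ : Fin s → Bool,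
        ((-1 : ℤ) ^ (s - ∑ i, (if δ i then 1 else 0))) •
          P (x + ∑ i, (if δ i then xs i else 0)) = 0 := by
  rintro x xs hx hxs ⟨i, j, hij, hdisj⟩
  classical
  set F : (Fin s → Bool) → V := fun δ =>
    ((-1 : ℤ) ^ (s - ∑ k, (if δ k then 1 else 0))) •
      P (x + ∑ k, (if δ k then xs k else 0)) with hF
  show ∑ δ : Fin s → Bool, F δ = 0
  set S := {d : Fin s → Bool // d i = false ∧ d j = false} with hS
  let e : S × Bool × Bool ≃ (Fin s → Bool) :=
  { toFun := fun p => Function.update (Function.update p.1.1 i p.2.1) j p.2.2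
    invFun := fun δ => (⟨Function.update (Function.update δ i false) j false,
        by simp [Function.update_apply, hij], by simp⟩, δ i, δ j)
    left_inv := by
      rintro ⟨⟨d, hdi, hdj⟩, a, b⟩
      refine Prod.ext (Subtype.ext ?_) (Prod.ext ?_ ?_)
      · funext k
        simp only [Function.update_apply]
        split_ifs <;> simp_all
      · simp [Function.update_apply, hij]
      · simp [Function.update_apply]
    right_inv := by
      intro δ
      funext k
      simp only [Function.update_apply]
      split_ifs <;> simp_all }
  rw [← Equiv.sum_comp e F, Fintype.sum_prod_type]
  apply Finset.sum_eq_zero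
  rintro ⟨d, hdi, hdj⟩ -
  set m := ∑ k, (if d k then (1:ℕ) else 0) with hm
  set base := ∑ k, (if d k then xs k else 0) with hbase
  have hle : ∀ δ : Fin s → Bool, (∑ k, if δ k then (1:ℕ) else 0) ≤ s := by
    intro δ
    calc (∑ k, if δ k then (1:ℕ) else 0) ≤ ∑ _k : Fin s, 1 :=
          Finset.sum_le_sum fun k _ => by split <;> omega
      _ = s := by simp
  have hcnt : ∀ a b : Bool,
      (∑ k, (if Function.update (Function.update d i a) j b k then (1:ℕ) else 0))
        = (if a then 1 else 0) + (if b then 1 else 0) + m :=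
    fun a b => sum_upd2 hij (fun c _ => if c then 1 else 0) (fun _ => rfl) d hdi hdj a b
  have hvec : ∀ a b : Bool,
      (∑ k, (if Function.update (Function.update d i a) j b k then xs k else 0))
        = (if a then xs i else 0) + (if b then xs j else 0) + base :=
    fun a b => sum_upd2 hij (fun c k => if c then xs k else 0) (fun _ => rfl) d hdi hdj a b
  have hm2 : ∀ a b : Bool, (if a then 1 else 0) + (if b then 1 else 0) + m ≤ s := by
    intro a b; rw [← hcnt a b]; exact hle _
  have hsign : ∀ k, k ≤ s → ((-1:ℤ)) ^ (s - k) = (-1) ^ s * (-1) ^ k := by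
    intro k hk
    have hA : (-1:ℤ) ^ (s - k) * (-1) ^ k = (-1) ^ s := by
      rw [← pow_add, Nat.sub_add_cancel hk]
    have hB : (-1:ℤ) ^ k * (-1) ^ k = 1 := by
      rw [← pow_add]; exact Even.neg_one_pow ⟨k, rfl⟩
    calc (-1:ℤ) ^ (s - k) = (-1) ^ (s - k) * ((-1) ^ k * (-1) ^ k) := by rw [hB, mul_one]
      _ = ((-1) ^ (s - k) * (-1) ^ k) * (-1) ^ k := by ring
      _ = (-1) ^ s * (-1) ^ k := by rw [hA]
  have hF' : ∀ a b : Bool, F (e (⟨⟨d, hdi, hdj⟩, a, b⟩ : S × Bool × Bool))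
      = ((-1:ℤ) ^ s * (-1) ^ ((if a then 1 else 0) + (if b then 1 else 0) + m)) •
        P (x + ((if a then xs i else 0) + (if b then xs j else 0) + base)) := by
    intro a b
    show ((-1 : ℤ) ^ (s - ∑ k, (if Function.update (Function.update d i a) j b k then 1 else 0))) •
        P (x + ∑ k, (if Function.update (Function.update d i a) j b k then xs k else 0)) = _
    rw [hcnt a b, hvec a b, hsign _ (hm2 a b)]
  rw [Fintype.sum_prod_type]
  simp only [Fintype.sum_bool, hF', if_true, if_false, Bool.false_eq_true, add_zero, zero_add]
  have hbase0 : (0:E) ≤ base := by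
    rw [hbase]
    refine Finset.sum_induction _ (fun v => 0 ≤ v) (fun a b ha hb => add_nonneg ha hb)
      le_rfl fun k _ => ?_
    split
    · exact hxs k
    · exact le_refl 0
  have hz : (0:E) ≤ x + base := add_nonneg hx hbase0
  have key := hH (xs i) (xs j) (x + base) (hxs i) (hxs j) hz hdisj
  have e1 : xs i + xs j + (x + base) = x + (xs i + xs j + base) := by abel
  have e2 : xs i + (x + base) = x + (xs i + base) := by abel
  have e3 : xs j + (x + base) = x + (xs j + base) := by abel
  rw [e1, e2, e3] at key
  have p1 : (-1:ℤ) ^ (1 + 1 + m) = (-1) ^ m := by rw [pow_add, pow_add]; ring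
  have p2 : (-1:ℤ) ^ (1 + m) = -((-1) ^ m) := by rw [pow_add]; ring
  rw [p1, p2]
  linear_combination (norm := module) ((-1:ℤ) ^ s * (-1) ^ m) • key
end

section
/- Let E be a vector lattice, V a vector space, s ≥ 2, and P : E → V an s-homogeneous polynomial with symmetric generating s-linear map T (so P(x) = T(x,...,x)). If T is orthosymmetric, then P has the Hammerstein property: P(x+y+z) − P(x+z) = P(y+z) − P(z) for all x, y, z ∈ E with x ⊥ y. -/
/-- If the symmetric generating s-linear map of `P` is orthosymmetric, then `P`
has the Hammerstein property. -/
theorem stmt5 {E V : Type*} [AddCommGroup E] [Lattice E]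
    [CovariantClass E E (· + ·) (· ≤ ·)] [Module ℝ E]
    [AddCommGroup V] [Module ℝ V] (s : ℕ) (hs : 2 ≤ s)
    (T : MultilinearMap ℝ (fun _ : Fin s => E) V)
    (hsymm : ∀ (v : Fin s → E) (σ : Equiv.Perm (Fin s)), T (v ∘ σ) = T v)
    (P : E → V) (hP : ∀ x : E, P x = T (fun _ => x))
    (hos : ∀ v : Fin s → E, (∃ i j, i ≠ j ∧ |v i| ⊓ |v j| = 0) → T v = 0) :
    ∀ x y z : E, |x| ⊓ |y| = 0 →
      P (x + y + z) - P (x + z) = P (y + z) - P z := by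
  intro x y z hxy
  have fin3 : ∀ a : Fin 3, a = 0 ∨ a = 1 ∨ a = 2 := by decide
  -- expansion of a diagonal evaluation
  have expand : ∀ w : Fin 3 → E,
      T (fun _ => w 0 + w 1 + w 2)
        = ∑ r : Fin s → Fin 3, T (fun i => w (r i)) := by
    intro w
    have := T.map_sum (g := fun (_ : Fin s) (j : Fin 3) => w j)
    simpa [Fin.sum_univ_three] using this
  -- pointwise identity
  have key : ∀ r : Fin s → Fin 3,
      T (fun i => ![x, y, z] (r i)) - T (fun i => ![x, 0, z] (r i))
        = T (fun i => ![0, y, z] (r i)) - T (fun i => ![0, 0, z] (r i)) := by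
    intro r
    by_cases h0 : ∀ i, r i ≠ 0
    · by_cases h1 : ∀ i, r i ≠ 1
      · -- r is constantly 2
        have hr : ∀ i, r i = 2 := by
          intro i
          rcases fin3 (r i) with h | h | h
          · exact absurd h (h0 i)
          · exact absurd h (h1 i)
          · exact h
        simp [hr]
      · push_neg at h1
        obtain ⟨j, hj⟩ := h1
        have e1 : (fun i => ![x, y, z] (r i)) = fun i => ![(0:E), y, z] (r i) := by
          funext i
          rcases fin3 (r i) with h | h | h
          · exact absurd h (h0 i)
          · simp [h]
          · simp [h]
        have e2 : T (fun i => ![x, 0, z] (r i)) = 0 :=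
          T.map_coord_zero j (by simp [hj])
        have e3 : T (fun i => ![(0:E), 0, z] (r i)) = 0 :=
          T.map_coord_zero j (by simp [hj])
        rw [e1, e2, e3]
    · push_neg at h0
      obtain ⟨i0, hi0⟩ := h0
      by_cases h1 : ∀ i, r i ≠ 1
      · have e1 : (fun i => ![x, y, z] (r i)) = fun i => ![x, (0:E), z] (r i) := by
          funext i
          rcases fin3 (r i) with h | h | h
          · simp [h]
          · exact absurd h (h1 i)
          · simp [h]
        have e3 : T (fun i => ![(0:E), y, z] (r i)) = 0 :=
          T.map_coord_zero i0 (by simp [hi0])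
        have e4 : T (fun i => ![(0:E), 0, z] (r i)) = 0 :=
          T.map_coord_zero i0 (by simp [hi0])
        rw [e1, e3, e4, sub_self, sub_self]
      · push_neg at h1
        obtain ⟨j1, hj1⟩ := h1
        have hne : i0 ≠ j1 := by
          intro h; rw [h, hj1] at hi0; exact absurd hi0 (by decide)
        have e1 : T (fun i => ![x, y, z] (r i)) = 0 := by
          apply hos
          exact ⟨i0, j1, hne, by simpa [hi0, hj1] using hxy⟩
        have e2 : T (fun i => ![x, 0, z] (r i)) = 0 :=
          T.map_coord_zero j1 (by simp [hj1])
        have e3 : T (fun i => ![(0:E), y, z] (r i)) = 0 :=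
          T.map_coord_zero i0 (by simp [hi0])
        have e4 : T (fun i => ![(0:E), 0, z] (r i)) = 0 :=
          T.map_coord_zero i0 (by simp [hi0])
        rw [e1, e2, e3, e4]
  have E1 : P (x + y + z) = ∑ r : Fin s → Fin 3, T (fun i => ![x, y, z] (r i)) := by
    rw [hP]
    have := expand ![x, y, z]
    simpa using this
  have E2 : P (x + z) = ∑ r : Fin s → Fin 3, T (fun i => ![x, 0, z] (r i)) := by
    rw [hP]
    have := expand ![x, 0, z]
    simpa using this
  have E3 : P (y + z) = ∑ r : Fin s → Fin 3, T (fun i => ![(0:E), y, z] (r i)) := by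
    rw [hP]
    have := expand ![0, y, z]
    simpa using this
  have E4 : P z = ∑ r : Fin s → Fin 3, T (fun i => ![(0:E), 0, z] (r i)) := by
    rw [hP]
    have := expand ![0, 0, z]
    simpa using this
  rw [E1, E2, E3, E4, ← Finset.sum_sub_distrib, ← Finset.sum_sub_distrib]
  exact Finset.sum_congr rfl fun r _ => key r
end

section
/- Let E be a vector lattice, V a vector space, s ≥ 2, and P : E → V an s-homogeneous polynomial whose restriction to E⁺ has the Hammerstein property. Then the symmetric generating s-linear map T of P satisfies T(x₁,...,x_s) = 0 for all x₁,...,x_s ∈ E⁺ with x_i ⊥ x_j for some i ≠ j. -/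
open scoped BigOperators

open Finset in
theorem sign_sum_aux {s : ℕ} (R : Finset (Fin s)) :
    ∑ A ∈ (Finset.univ : Finset (Fin s)).powerset.filter (fun A => R ⊆ A), (-1:ℤ)^A.card
      = if R = Finset.univ then (-1:ℤ)^s else 0 := by
  rw [Finset.sum_nbij' (i := fun A => A \ R) (j := fun D => R ∪ D)
      (t := Rᶜ.powerset) (g := fun D => (-1:ℤ)^(R.card + D.card))]
  · simp only [pow_add, ← Finset.mul_sum, Finset.sum_powerset_neg_one_pow_card]
    by_cases h : R = Finset.univ
    · simp [h, Finset.card_univ]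
    · have h' : Rᶜ ≠ ∅ := by
        simpa [Finset.compl_eq_empty_iff] using h
      simp [h, h']
  · intro A hA
    simp only [mem_filter, mem_powerset] at hA
    simp only [mem_powerset]
    intro x hx
    simp only [mem_sdiff] at hx
    simp [hx.2]
  · intro D hD
    simp only [mem_powerset] at hD
    simp [Finset.mem_filter, Finset.mem_powerset]
  · intro A hA
    simp only [mem_filter, mem_powerset] at hA
    exact Finset.union_sdiff_of_subset hA.2
  · intro D hD
    simp only [mem_powerset] at hD
    have hd : Disjoint R D := Finset.disjoint_left.mpr
      fun a ha ha' => (Finset.mem_compl.mp (hD ha')) ha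
    rw [Finset.union_sdiff_cancel_left hd]
  · intro A hA
    simp only [mem_filter, mem_powerset] at hA
    rw [← Finset.card_sdiff_add_card_eq_card hA.2, add_comm]

open Finset in
theorem polar_aux {E V : Type*} [AddCommGroup E] [Module ℝ E]
    [AddCommGroup V] [Module ℝ V] (s : ℕ)
    (T : MultilinearMap ℝ (fun _ : Fin s => E) V)
    (hsymm : ∀ (v : Fin s → E) (σ : Equiv.Perm (Fin s)), T (v ∘ σ) = T v)
    (v : Fin s → E) :
    ∑ A ∈ (Finset.univ : Finset (Fin s)).powerset, (-1:ℤ)^A.card • T (fun _ => ∑ k ∈ A, v k)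
      = (((-1:ℤ)^s) * (Finset.univ.filter (fun f : Fin s → Fin s => Function.Bijective f)).card)
          • T v := by
  have step1 : ∀ A : Finset (Fin s),
      (T (fun _ => ∑ k ∈ A, v k)) = ∑ f ∈ Finset.univ.filter (fun f : Fin s → Fin s => ∀ k, f k ∈ A),
        T (fun k => v (f k)) := by
    intro A
    rw [T.map_sum_finset (g := fun _ j => v j) (A := fun _ => A)]
    apply Finset.sum_congr _ (fun _ _ => rfl)
    ext f
    simp [Fintype.mem_piFinset]
  calc ∑ A ∈ (Finset.univ : Finset (Fin s)).powerset, (-1:ℤ)^A.card • T (fun _ => ∑ k ∈ A, v k)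
      = ∑ A ∈ (Finset.univ : Finset (Fin s)).powerset, ∑ f : Fin s → Fin s,
          (if ∀ k, f k ∈ A then (-1:ℤ)^A.card • T (fun k => v (f k)) else 0) := by
        refine Finset.sum_congr rfl fun A _ => ?_
        rw [step1, Finset.smul_sum, Finset.sum_filter]
    _ = ∑ f : Fin s → Fin s, ∑ A ∈ (Finset.univ : Finset (Fin s)).powerset,
          (if ∀ k, f k ∈ A then (-1:ℤ)^A.card • T (fun k => v (f k)) else 0) :=
        Finset.sum_comm
    _ = ∑ f : Fin s → Fin s,
          (∑ A ∈ (Finset.univ : Finset (Fin s)).powerset.filter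
            (fun A => (Finset.univ.image f) ⊆ A), (-1:ℤ)^A.card) • T (fun k => v (f k)) := by
        refine Finset.sum_congr rfl fun f _ => ?_
        rw [← Finset.sum_filter, Finset.sum_smul]
        refine Finset.sum_congr ?_ (fun _ _ => rfl)
        apply Finset.filter_congr
        intro A _
        simp [Finset.image_subset_iff]
    _ = ∑ f : Fin s → Fin s,
          (if Function.Bijective f then ((-1:ℤ)^s) • T (fun k => v (f k)) else 0) := by
        refine Finset.sum_congr rfl fun f _ => ?_
        rw [sign_sum_aux]
        have himg : (Finset.univ.image f = Finset.univ) ↔ Function.Bijective f := by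
          constructor
          · intro h
            have hsurj : Function.Surjective f := by
              intro y
              have hy : y ∈ Finset.univ.image f := by rw [h]; exact Finset.mem_univ y
              rcases Finset.mem_image.mp hy with ⟨x, _, hx⟩
              exact ⟨x, hx⟩
            exact ⟨Finite.injective_iff_surjective.mpr hsurj, hsurj⟩
          · intro h
            apply Finset.eq_univ_of_forall
            intro y
            obtain ⟨x, hx⟩ := h.2 y
            exact Finset.mem_image.mpr ⟨x, Finset.mem_univ x, hx⟩
        by_cases hb : Function.Bijective f
        · rw [if_pos (himg.mpr hb), if_pos hb]
        · rw [if_neg (fun h => hb (himg.mp h)), if_neg hb, zero_smul]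
    _ = ∑ f ∈ Finset.univ.filter (fun f : Fin s → Fin s => Function.Bijective f),
          ((-1:ℤ)^s) • T (fun k => v (f k)) := (Finset.sum_filter _ _).symm
    _ = ∑ _f ∈ Finset.univ.filter (fun f : Fin s → Fin s => Function.Bijective f),
          ((-1:ℤ)^s) • T v := by
        refine Finset.sum_congr rfl fun f hf => ?_
        have hb : Function.Bijective f := by simpa using hf
        have := hsymm v (Equiv.ofBijective f hb)
        rw [← this]
        rfl
    _ = (((-1:ℤ)^s) * (Finset.univ.filter (fun f : Fin s → Fin s => Function.Bijective f)).card)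
          • T v := by
        rw [Finset.sum_const, ← Nat.cast_smul_eq_nsmul ℤ, smul_smul, mul_comm]

/-- If `P` restricted to the positive cone has the Hammerstein property, then its
symmetric generating s-linear map vanishes on positive tuples with two disjoint entries. -/
theorem stmt7 {E V : Type*} [AddCommGroup E] [Lattice E]
    [CovariantClass E E (· + ·) (· ≤ ·)] [Module ℝ E]
    [AddCommGroup V] [Module ℝ V] (s : ℕ) (hs : 2 ≤ s)
    (T : MultilinearMap ℝ (fun _ : Fin s => E) V)
    (hsymm : ∀ (v : Fin s → E) (σ : Equiv.Perm (Fin s)), T (v ∘ σ) = T v)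
    (P : E → V) (hP : ∀ x : E, P x = T (fun _ => x))
    (hH : ∀ x y z : E, 0 ≤ x → 0 ≤ y → 0 ≤ z → x ⊓ y = 0 →
      P (x + y + z) - P (x + z) = P (y + z) - P z) :
    ∀ v : Fin s → E, (∀ i, 0 ≤ v i) →
      (∃ i j, i ≠ j ∧ v i ⊓ v j = 0) → T v = 0 := by
  rintro v hv ⟨i, j, hij, hdisj⟩
  classical
  set c : Finset (Fin s) := Finset.univ \ {i, j} with hc
  have hjc : j ∉ c := by simp [hc]
  have hijc : i ∉ insert j c := by simp [hc, hij]
  have huniv : (Finset.univ : Finset (Fin s)) = insert i (insert j c) := by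
    ext x
    by_cases hx1 : x = i <;> by_cases hx2 : x = j <;> simp [hc, hx1, hx2]
  -- the alternating sum is zero by the Hammerstein property
  have hS : ∑ A ∈ (Finset.univ : Finset (Fin s)).powerset,
      (-1:ℤ)^A.card • P (∑ k ∈ A, v k) = 0 := by
    rw [huniv, Finset.sum_powerset_insert hijc, Finset.sum_powerset_insert hjc,
      Finset.sum_powerset_insert hjc, add_assoc, ← Finset.sum_add_distrib,
      ← Finset.sum_add_distrib, ← Finset.sum_add_distrib]
    apply Finset.sum_eq_zero
    intro C hC
    have hCc : C ⊆ c := Finset.mem_powerset.mp hC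
    have hjC : j ∉ C := fun h => hjc (hCc h)
    have hiC : i ∉ insert j C := by
      simp only [Finset.mem_insert]
      rintro (h | h)
      · exact hij h
      · exact hijc (Finset.mem_insert_of_mem (hCc h))
    have hiC' : i ∉ C := fun h => hiC (Finset.mem_insert_of_mem h)
    have hz : 0 ≤ ∑ k ∈ C, v k := by
      refine Finset.sum_induction v (0 ≤ ·) (fun a b ha hb => ?_) le_rfl (fun k _ => hv k)
      calc (0:E) = 0 + 0 := (add_zero 0).symm
        _ ≤ a + b := add_le_add ha hb
    have key := hH (v i) (v j) (∑ k ∈ C, v k) (hv i) (hv j) hz hdisj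
    rw [Finset.sum_insert hjC, Finset.sum_insert hiC', Finset.sum_insert hiC,
      Finset.sum_insert hjC, Finset.card_insert_of_notMem hjC,
      Finset.card_insert_of_notMem hiC', Finset.card_insert_of_notMem hiC,
      Finset.card_insert_of_notMem hjC]
    have harr : v i + (v j + ∑ k ∈ C, v k) = v i + v j + ∑ k ∈ C, v k := (add_assoc _ _ _).symm
    rw [harr]
    have : P (v i + v j + ∑ k ∈ C, v k) =
        P (v j + ∑ k ∈ C, v k) + P (v i + ∑ k ∈ C, v k) - P (∑ k ∈ C, v k) := by
      rw [sub_eq_sub_iff_sub_eq_sub] at key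
      linear_combination (norm := abel) key
    rw [this]
    rw [pow_succ, pow_succ, pow_succ]
    match hpar : ((-1:ℤ)^C.card) with
    | n =>
      simp only [smul_sub, smul_add, mul_neg_one, neg_smul, neg_neg]
      abel
  rw [show (fun A => (-1:ℤ)^A.card • P (∑ k ∈ A, v k)) = fun A : Finset (Fin s) =>
    (-1:ℤ)^A.card • T (fun _ => ∑ k ∈ A, v k) from funext fun A => by rw [hP]] at hS
  rw [polar_aux s T hsymm v] at hS
  have hN : 0 < (Finset.univ.filter (fun f : Fin s → Fin s => Function.Bijective f)).card :=
    Finset.card_pos.mpr ⟨id, Finset.mem_filter.mpr ⟨Finset.mem_univ _, Function.bijective_id⟩⟩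
  have hcne : ((-1:ℤ)^s * (Finset.univ.filter
      (fun f : Fin s → Fin s => Function.Bijective f)).card) ≠ 0 :=
    mul_ne_zero (pow_ne_zero _ (by norm_num)) (by exact_mod_cast hN.ne')
  rw [← Int.cast_smul_eq_zsmul ℝ] at hS
  rcases smul_eq_zero.mp hS with h | h
  · exact absurd h (Int.cast_ne_zero.mpr hcne)
  · exact h
end

section
/- Let E be a vector lattice and V a vector space, s ≥ 2, and P : E → V an s-homogeneous polynomial with symmetric generating s-linear map T. Then the following are equivalent: (1) P is a valuation; (2) P restricted to E⁺ is a valuation; (3) P has the Hammerstein property; (4) P restricted to E⁺ has the Hammerstein property; (5) T is orthosymmetric; (6) T restricted to (E⁺)^s is orthosymmetric. -/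
/-!
Expanding `P (x + y + z)` multilinearly over the three summands, the mixed second difference
`P (x + y + z) - P (x + z) - P (y + z) + P z` is the sum of the values of `T` at tuples containing
both `x` and `y`; so orthosymmetry gives the Hammerstein property, which is the valuation identity
after writing `x = a + m`, `y = b + m` with `m = x ⊓ y` and `a ⊓ b = 0`. Conversely, by the
polarization identity `s! • T v` is an alternating sum of values of `P` at partial sums of `v`;
if `v i ⊓ v j = 0` these terms pair up into mixed second differences in the directions `v i`,
`v j`, which vanish by the Hammerstein property on the positive cone. Splitting each argument into
positive and negative parts removes the positivity assumption.
-/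

open Finset

section LatticeOrderedGroup

variable {E V : Type*} [AddCommGroup E] [Lattice E] [AddLeftMono E] [AddCommGroup V]

theorem add_inf_add_eq_of_inf_eq_zero {x y : E} (hxy : x ⊓ y = 0) (z : E) :
    (x + z) ⊓ (y + z) = z := by
  rw [← inf_add, hxy, zero_add]

theorem add_sup_add_eq_of_inf_eq_zero {x y : E} (hxy : x ⊓ y = 0) (z : E) :
    (x + z) ⊔ (y + z) = x + y + z := by
  have h := inf_add_sup (x + z) (y + z)
  rw [add_inf_add_eq_of_inf_eq_zero hxy] at h
  rw [← add_right_inj z, h]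
  abel

theorem hammerstein_of_valuation_of_nonneg {P : E → V}
    (hP : ∀ x y : E, 0 ≤ x → 0 ≤ y → P x + P y = P (x ⊓ y) + P (x ⊔ y))
    {x y z : E} (hx : 0 ≤ x) (hy : 0 ≤ y) (hz : 0 ≤ z) (hxy : x ⊓ y = 0) :
    P (x + y + z) - P (x + z) = P (y + z) - P z := by
  have h := hP (x + z) (y + z) (add_nonneg hx hz) (add_nonneg hy hz)
  rw [add_inf_add_eq_of_inf_eq_zero hxy, add_sup_add_eq_of_inf_eq_zero hxy] at h
  rw [sub_eq_sub_iff_add_eq_add, add_comm (P (y + z)), h, add_comm]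

theorem valuation_of_hammerstein {P : E → V}
    (hP : ∀ x y z : E, |x| ⊓ |y| = 0 → P (x + y + z) - P (x + z) = P (y + z) - P z) (x y : E) :
    P x + P y = P (x ⊓ y) + P (x ⊔ y) := by
  have ha : 0 ≤ x - x ⊓ y := sub_nonneg.2 inf_le_left
  have hb : 0 ≤ y - x ⊓ y := sub_nonneg.2 inf_le_right
  have hab : (x - x ⊓ y) ⊓ (y - x ⊓ y) = 0 := by rw [← inf_sub, sub_self]
  have h := hP (x - x ⊓ y) (y - x ⊓ y) (x ⊓ y) (by rwa [abs_of_nonneg ha, abs_of_nonneg hb])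
  rw [← add_sup_add_eq_of_inf_eq_zero hab, sub_add_cancel, sub_add_cancel,
    sub_eq_sub_iff_add_eq_add] at h
  rw [add_comm (P x), add_comm (P (x ⊓ y)), h]

end LatticeOrderedGroup

theorem Finset.sum_powerset_neg_one_pow_smul_eq_zero {ι G : Type*} [DecidableEq ι]
    [AddCommGroup G] {s : Finset ι} {i j : ι} (hi : i ∈ s) (hj : j ∈ s) (hij : i ≠ j)
    (f : Finset ι → G) (hf : ∀ t ⊆ s, i ∉ t → j ∉ t →
      f t - f (insert i t) - f (insert j t) + f (insert i (insert j t)) = 0) :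
    ∑ t ∈ s.powerset, (-1 : ℤ) ^ #t • f t = 0 := by
  set U := (s.erase i).erase j
  have hjU : j ∉ U := notMem_erase j _
  have hiU : i ∉ insert j U := by simp [U, hij]
  have hs : insert i (insert j U) = s := by
    rw [insert_erase (mem_erase.2 ⟨hij.symm, hj⟩), insert_erase hi]
  rw [← hs, sum_powerset_insert hiU, sum_powerset_insert hjU, sum_powerset_insert hjU,
    ← sum_add_distrib, ← sum_add_distrib, ← sum_add_distrib]
  refine sum_eq_zero fun t ht => ?_
  have htU : t ⊆ U := mem_powerset.1 ht
  have hjt : j ∉ t := fun h => hjU (htU h)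
  have hit : i ∉ t := fun h => hiU (mem_insert_of_mem (htU h))
  have hijt : i ∉ insert j t := by simp [hij, hit]
  rw [card_insert_of_notMem hjt, card_insert_of_notMem hit, card_insert_of_notMem hijt,
    card_insert_of_notMem hjt]
  calc _ = (-1 : ℤ) ^ #t •
        (f t - f (insert i t) - f (insert j t) + f (insert i (insert j t))) := by
        simp only [pow_succ, mul_neg, mul_one, neg_neg, neg_smul, smul_add, smul_sub]
        abel
    _ = 0 := by
        rw [hf t (htU.trans ((erase_subset _ _).trans (erase_subset _ _))) hit hjt, smul_zero]

namespace MultilinearMap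

variable {R ι M N : Type*} [Fintype ι] [DecidableEq ι]

section Polarization

variable [Semiring R] [AddCommMonoid M] [Module R M] [AddCommGroup N] [Module R N]

/-- Polarization: inclusion–exclusion over the indices missed by `r : ι → ι` isolates the
bijective `r` in the expansion `T (fun _ => ∑ k ∈ u, v k) = ∑ r : ι → u, T (v ∘ r)`. -/
theorem sum_perm_comp_eq_alternating_sum (T : MultilinearMap R (fun _ : ι => M) N)
    (v : ι → M) :
    ∑ σ : Equiv.Perm ι, T (v ∘ σ) =
      ∑ t : Finset ι, (-1 : ℤ) ^ #t • T (fun _ => ∑ k ∈ tᶜ, v k) := by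
  let avoiding (k : ι) : Finset (ι → ι) := {r | ∀ i, r i ≠ k}
  have hsurj : univ.inf (fun k => (avoiding k)ᶜ) = univ.filter Function.Surjective := by
    ext r; simp [avoiding, mem_inf, Function.Surjective]
  have hrange (t : Finset ι) : t.inf avoiding = Fintype.piFinset fun _ => tᶜ := by
    ext r
    simp only [avoiding, mem_inf, mem_filter, mem_univ, true_and, Fintype.mem_piFinset, mem_compl]
    exact ⟨fun h a ha => h _ ha a rfl, fun h k hk a hak => h a (hak ▸ hk)⟩
  have h := inclusion_exclusion_sum_inf_compl univ avoiding (fun r => T (v ∘ r))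
  rw [hsurj, powerset_univ] at h
  simp only [hrange] at h
  calc ∑ σ : Equiv.Perm ι, T (v ∘ σ) = ∑ r ∈ univ.filter Function.Surjective, T (v ∘ r) := by
        refine sum_bij' (fun σ _ => σ) (fun r hr => Equiv.ofBijective r
          ⟨Finite.injective_iff_surjective.2 (mem_filter.1 hr).2, (mem_filter.1 hr).2⟩)
          ?_ ?_ ?_ (fun _ _ => rfl) ?_ <;> simp [Equiv.surjective]
    _ = _ := by
        rw [h]
        exact sum_congr rfl fun t _ => by rw [T.map_sum_finset]; rfl

theorem factorial_smul_eq_alternating_sum (T : MultilinearMap R (fun _ : ι => M) N)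
    (hT : ∀ (v : ι → M) (σ : Equiv.Perm ι), T (v ∘ σ) = T v) (v : ι → M) :
    (Fintype.card ι).factorial • T v =
      ∑ t : Finset ι, (-1 : ℤ) ^ #t • T (fun _ => ∑ k ∈ tᶜ, v k) := by
  rw [← T.sum_perm_comp_eq_alternating_sum, ← Fintype.card_perm, ← card_univ, ← sum_const]
  exact sum_congr rfl fun σ _ => (hT v σ).symm

theorem map_diag_sub_eq_of_mixed_eq_zero (T : MultilinearMap R (fun _ : ι => M) N) (x y z : M)
    (h : ∀ r : ι → Fin 3, (∃ a, r a = 0) → (∃ b, r b = 1) → T (![x, y, z] ∘ r) = 0) :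
    T (fun _ => x + y + z) - T (fun _ => x + z) = T (fun _ => y + z) - T (fun _ => z) := by
  have expand (w : Fin 3 → M) : T (fun _ => w 0 + w 1 + w 2) = ∑ r : ι → Fin 3, T (w ∘ r) := by
    simp only [← Fin.sum_univ_three]
    exact T.map_sum fun _ => w
  have e₁ := expand ![x, y, z]
  have e₂ := expand ![x, 0, z]
  have e₃ := expand ![0, y, z]
  have e₄ := expand ![0, 0, z]
  simp only [Matrix.cons_val, add_zero, zero_add] at e₁ e₂ e₃ e₄
  rw [e₁, e₂, e₃, e₄, ← sum_sub_distrib, ← sum_sub_distrib]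
  refine sum_congr rfl fun r _ => ?_
  by_cases h₀ : ∃ a, r a = 0
  · by_cases h₁ : ∃ b, r b = 1
    · obtain ⟨a, ha⟩ := h₀
      obtain ⟨b, hb⟩ := h₁
      rw [h r ⟨a, ha⟩ ⟨b, hb⟩, T.map_coord_zero b (by simp [hb]),
        T.map_coord_zero a (by simp [ha]), T.map_coord_zero a (by simp [ha])]
    · push Not at h₁
      have hy (u : M) : ![u, y, z] ∘ r = ![u, 0, z] ∘ r := by
        rw [← Function.update_comp_eq_of_forall_ne _ 0 h₁]
        congr 1; ext k; fin_cases k <;> rfl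
      rw [hy, hy, sub_self, sub_self]
  · push Not at h₀
    have hx (u : M) : ![x, u, z] ∘ r = ![0, u, z] ∘ r := by
      rw [← Function.update_comp_eq_of_forall_ne _ 0 h₀]
      congr 1; ext k; fin_cases k <;> rfl
    rw [hx, hx]

end Polarization

section VectorLattice

variable {E V : Type*} [AddCommGroup E] [Lattice E] [AddCommGroup V]

theorem hammerstein_of_orthosymmetric [Semiring R] [Module R E] [Module R V]
    (T : MultilinearMap R (fun _ : ι => E) V)
    (hT : ∀ v : ι → E, (∃ i j, i ≠ j ∧ |v i| ⊓ |v j| = 0) → T v = 0)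
    {x y : E} (hxy : |x| ⊓ |y| = 0) (z : E) :
    T (fun _ => x + y + z) - T (fun _ => x + z) = T (fun _ => y + z) - T (fun _ => z) := by
  refine T.map_diag_sub_eq_of_mixed_eq_zero x y z fun r ⟨a, ha⟩ ⟨b, hb⟩ => hT _ ⟨a, b, ?_, ?_⟩
  · rintro rfl
    exact absurd (ha.symm.trans hb) (by decide)
  · simpa [ha, hb] using hxy

variable [AddLeftMono E]

theorem map_eq_zero_of_forall_posPart_negPart [CommRing R] [Module R E] [Module R V]
    (T : MultilinearMap R (fun _ : ι => E) V) (v : ι → E)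
    (h : ∀ r : ι → Bool, T (fun k => if r k then (v k)⁺ else (v k)⁻) = 0) : T v = 0 := by
  have hv : v = fun k =>
      ∑ b : Bool, (if b then 1 else -1 : R) • (if b then (v k)⁺ else (v k)⁻) := by
    ext k; simp [← sub_eq_add_neg]
  rw [hv, T.map_sum]
  refine sum_eq_zero fun r _ => ?_
  rw [T.map_smul_univ (fun k => if r k then 1 else -1)
    (fun k => if r k then (v k)⁺ else (v k)⁻), h r, smul_zero]

theorem orthosymmetric_of_orthosymmetric_nonneg [CommRing R] [Module R E] [Module R V]
    (T : MultilinearMap R (fun _ : ι => E) V)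
    (hT : ∀ v : ι → E, (∀ i, 0 ≤ v i) → (∃ i j, i ≠ j ∧ v i ⊓ v j = 0) → T v = 0)
    (v : ι → E) (hv : ∃ i j, i ≠ j ∧ |v i| ⊓ |v j| = 0) : T v = 0 := by
  obtain ⟨i, j, hij, hvij⟩ := hv
  refine T.map_eq_zero_of_forall_posPart_negPart v fun r => ?_
  have hpart (k : ι) :
      0 ≤ (if r k then (v k)⁺ else (v k)⁻) ∧ (if r k then (v k)⁺ else (v k)⁻) ≤ |v k| := by
    rw [← posPart_add_negPart]
    split_ifs
    · exact ⟨posPart_nonneg _, le_add_of_nonneg_right (negPart_nonneg _)⟩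
    · exact ⟨negPart_nonneg _, le_add_of_nonneg_left (posPart_nonneg _)⟩
  refine hT _ (fun k => (hpart k).1) ⟨i, j, hij, le_antisymm ?_ (le_inf (hpart i).1 (hpart j).1)⟩
  exact hvij ▸ inf_le_inf (hpart i).2 (hpart j).2

theorem orthosymmetric_nonneg_of_hammerstein_nonneg {𝕜 : Type*} [DivisionRing 𝕜] [CharZero 𝕜]
    [Module 𝕜 E] [Module 𝕜 V] (T : MultilinearMap 𝕜 (fun _ : ι => E) V)
    (hT : ∀ (v : ι → E) (σ : Equiv.Perm ι), T (v ∘ σ) = T v)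
    (hP : ∀ x y z : E, 0 ≤ x → 0 ≤ y → 0 ≤ z → x ⊓ y = 0 →
      T (fun _ => x + y + z) - T (fun _ => x + z) = T (fun _ => y + z) - T (fun _ => z))
    (v : ι → E) (hv : ∀ i, 0 ≤ v i) (hvij : ∃ i j, i ≠ j ∧ v i ⊓ v j = 0) : T v = 0 := by
  obtain ⟨i, j, hij, hvij⟩ := hvij
  have hcompl (t : Finset ι) (k : ι) (hk : k ∉ t) :
      ∑ l ∈ tᶜ, v l = v k + ∑ l ∈ (insert k t)ᶜ, v l := by
    rw [compl_insert, add_sum_erase _ _ (mem_compl.2 hk)]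
  have hsum : ∑ t : Finset ι, (-1 : ℤ) ^ #t • T (fun _ => ∑ k ∈ tᶜ, v k) = 0 := by
    rw [← powerset_univ]
    refine sum_powerset_neg_one_pow_smul_eq_zero (mem_univ i) (mem_univ j) hij _
      fun t _ hit hjt => ?_
    set w := ∑ k ∈ (insert i (insert j t))ᶜ, v k
    have hj : ∑ k ∈ (insert j t)ᶜ, v k = v i + w := hcompl _ i (by simp [hij, hit])
    have hi : ∑ k ∈ (insert i t)ᶜ, v k = v j + w := by
      rw [hcompl _ j (by simp [hij.symm, hjt]), insert_comm]
    have ht : ∑ k ∈ tᶜ, v k = v i + v j + w := by rw [hcompl t i hit, hi, add_assoc]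
    rw [ht, hi, hj, ← sub_eq_zero.2 (hP _ _ _ (hv i) (hv j) (sum_nonneg fun k _ => hv k) hvij)]
    abel
  rw [← T.factorial_smul_eq_alternating_sum hT, ← Nat.cast_smul_eq_nsmul 𝕜, smul_eq_zero] at hsum
  exact hsum.resolve_left (Nat.cast_ne_zero.2 (Nat.factorial_ne_zero _))

end VectorLattice

end MultilinearMap

theorem stmt11_general {E V : Type*} [AddCommGroup E] [Lattice E]
    [CovariantClass E E (· + ·) (· ≤ ·)] [Module ℝ E]
    [AddCommGroup V] [Module ℝ V] (s : ℕ)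
    (T : MultilinearMap ℝ (fun _ : Fin s => E) V)
    (hsymm : ∀ (v : Fin s → E) (σ : Equiv.Perm (Fin s)), T (v ∘ σ) = T v)
    (P : E → V) (hP : ∀ x : E, P x = T (fun _ => x)) :
    List.TFAE [
      ∀ x y : E, P x + P y = P (x ⊓ y) + P (x ⊔ y),
      ∀ x y : E, 0 ≤ x → 0 ≤ y → P x + P y = P (x ⊓ y) + P (x ⊔ y),
      ∀ x y z : E, |x| ⊓ |y| = 0 → P (x + y + z) - P (x + z) = P (y + z) - P z,
      ∀ x y z : E, 0 ≤ x → 0 ≤ y → 0 ≤ z → x ⊓ y = 0 →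
        P (x + y + z) - P (x + z) = P (y + z) - P z,
      ∀ v : Fin s → E, (∃ i j, i ≠ j ∧ |v i| ⊓ |v j| = 0) → T v = 0,
      ∀ v : Fin s → E, (∀ i, 0 ≤ v i) → (∃ i j, i ≠ j ∧ v i ⊓ v j = 0) → T v = 0 ] := by
  tfae_have 1 → 2 := fun h x y _ _ => h x y
  tfae_have 2 → 4 := fun h x y z => hammerstein_of_valuation_of_nonneg h
  tfae_have 4 → 6 := by
    simp only [hP]
    exact T.orthosymmetric_nonneg_of_hammerstein_nonneg hsymm
  tfae_have 6 → 5 := T.orthosymmetric_of_orthosymmetric_nonneg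
  tfae_have 5 → 3 := by
    simp only [hP]
    exact fun h x y z hxy => T.hammerstein_of_orthosymmetric h hxy z
  tfae_have 3 → 1 := valuation_of_hammerstein
  tfae_finish

/-- Theorem: for an s-homogeneous polynomial `P` with symmetric generating s-linear map `T`
(`s ≥ 2`), the following are equivalent: (1) `P` is a valuation; (2) `P|E⁺` is a valuation;
(3) `P` has the Hammerstein property; (4) `P|E⁺` has the Hammerstein property;
(5) `T` is orthosymmetric; (6) `T|(E⁺)^s` is orthosymmetric. -/
theorem stmt11 {E V : Type*} [AddCommGroup E] [Lattice E]
    [CovariantClass E E (· + ·) (· ≤ ·)] [Module ℝ E]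
    [AddCommGroup V] [Module ℝ V] (s : ℕ) (hs : 2 ≤ s)
    (T : MultilinearMap ℝ (fun _ : Fin s => E) V)
    (hsymm : ∀ (v : Fin s → E) (σ : Equiv.Perm (Fin s)), T (v ∘ σ) = T v)
    (P : E → V) (hP : ∀ x : E, P x = T (fun _ => x)) :
    List.TFAE [
      ∀ x y : E, P x + P y = P (x ⊓ y) + P (x ⊔ y),
      ∀ x y : E, 0 ≤ x → 0 ≤ y → P x + P y = P (x ⊓ y) + P (x ⊔ y),
      ∀ x y z : E, |x| ⊓ |y| = 0 → P (x + y + z) - P (x + z) = P (y + z) - P z,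
      ∀ x y z : E, 0 ≤ x → 0 ≤ y → 0 ≤ z → x ⊓ y = 0 →
        P (x + y + z) - P (x + z) = P (y + z) - P z,
      ∀ v : Fin s → E, (∃ i j, i ≠ j ∧ |v i| ⊓ |v j| = 0) → T v = 0,
      ∀ v : Fin s → E, (∀ i, 0 ≤ v i) → (∃ i j, i ≠ j ∧ v i ⊓ v j = 0) → T v = 0 ] :=
  stmt11_general s T hsymm P hP
end

section
/- Let E and F be vector lattices with F Dedekind complete, s ≥ 2, and let T : E^s → F be an s-linear map of order bounded variation. If T is orthosymmetric, then its modulus |T| (in the Dedekind complete vector lattice of s-linear maps of order bounded variation) is orthosymmetric; consequently, the orthosymmetric s-linear maps of order bounded variation form an ideal. -/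
/-!
A partition sum of `T` at `x` is a sum of terms `|T v|` with `0 ≤ v i ≤ x i`. If `x i ⊥ x j`
then `v i ⊥ v j`, so by orthosymmetry every term vanishes and `|T| x = sup {0} = 0`.
Conversely, if `|S| ≤ |T|` then `|S x| ≤ |S| x ≤ |T| x = 0` on positive tuples with disjoint
coordinates `i, j`; splitting every `v k` as `(v k)⁺ - (v k)⁻` and expanding by multilinearity
reduces a general tuple with `|v i| ⊥ |v j|` to positive ones of this kind.
-/

open scoped BigOperators

/-- `l` is a (finite positive) partition of `x`. -/
def IsPartition {E : Type*} [AddCommMonoid E] [PartialOrder E] (x : E) (l : List E) : Prop :=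
  (∀ a ∈ l, 0 ≤ a) ∧ l.sum = x

/-- The partition sum `Σ_{k₁,...,k_s} |T(a₁ₖ₁, ..., a_sₖ_s)|` attached to a tuple of
partitions. -/
noncomputable def mlPartSum {E F : Type*} [AddCommGroup E] [Lattice E] [Module ℝ E]
    [AddCommGroup F] [Lattice F] [Module ℝ F] {s : ℕ}
    (T : MultilinearMap ℝ (fun _ : Fin s => E) F) (a : Fin s → List E) : F :=
  ∑ k : (∀ i : Fin s, Fin (a i).length), |T (fun i => (a i).get (k i))|

/-- The set of all partition sums of `T` at the positive tuple `x`. -/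
def mlSums {E F : Type*} [AddCommGroup E] [Lattice E] [Module ℝ E]
    [AddCommGroup F] [Lattice F] [Module ℝ F] {s : ℕ}
    (T : MultilinearMap ℝ (fun _ : Fin s => E) F) (x : Fin s → E) : Set F :=
  { y | ∃ a : Fin s → List E, (∀ i, IsPartition (x i) (a i)) ∧ y = mlPartSum T a }

/-- `T` is of order bounded variation. -/
def MlOBV {E F : Type*} [AddCommGroup E] [Lattice E] [Module ℝ E]
    [AddCommGroup F] [Lattice F] [Module ℝ F] {s : ℕ}
    (T : MultilinearMap ℝ (fun _ : Fin s => E) F) : Prop :=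
  ∀ x : Fin s → E, (∀ i, 0 ≤ x i) → BddAbove (mlSums T x)

/-- `T` is orthosymmetric. -/
def MlOrthosym {E F : Type*} [AddCommGroup E] [Lattice E] [Module ℝ E]
    [AddCommGroup F] [Lattice F] [Module ℝ F] {s : ℕ}
    (T : MultilinearMap ℝ (fun _ : Fin s => E) F) : Prop :=
  ∀ v : Fin s → E, (∃ i j, i ≠ j ∧ |v i| ⊓ |v j| = 0) → T v = 0

theorem inf_eq_zero_of_le_of_inf_eq_zero {α : Type*} [Lattice α] [Zero α] {a b a' b' : α}
    (ha : 0 ≤ a) (hb : 0 ≤ b) (haa' : a ≤ a') (hbb' : b ≤ b') (h : a' ⊓ b' = 0) : a ⊓ b = 0 :=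
  le_antisymm ((inf_le_inf haa' hbb').trans h.le) (le_inf ha hb)

theorem IsPartition.le_of_mem {E : Type*} [AddCommMonoid E] [PartialOrder E] [AddLeftMono E]
    {x : E} {l : List E} (hl : IsPartition x l) {a : E} (ha : a ∈ l) : a ≤ x := by
  classical
  rw [← hl.2, (List.perm_cons_erase ha).sum_eq, List.sum_cons]
  exact le_add_of_nonneg_right <| List.sum_nonneg fun b hb => hl.1 b (List.mem_of_mem_erase hb)

section Modulus

variable {E F : Type*} [AddCommGroup E] [Lattice E] [Module ℝ E]
    [AddCommGroup F] [Lattice F] [Module ℝ F] {s : ℕ}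

theorem mlPartSum_singleton (T : MultilinearMap ℝ (fun _ : Fin s => E) F) (x : Fin s → E) :
    mlPartSum T (fun i => [x i]) = |T x| := by
  have : Unique (∀ i : Fin s, Fin [x i].length) := Pi.unique (β := fun _ => Fin 1)
  rw [mlPartSum, Fintype.sum_unique]
  congr 2
  funext i
  simp

theorem abs_apply_mem_mlSums (T : MultilinearMap ℝ (fun _ : Fin s => E) F) {x : Fin s → E}
    (hx : ∀ i, 0 ≤ x i) : |T x| ∈ mlSums T x :=
  ⟨fun i => [x i], fun i => ⟨by simpa using hx i, by simp⟩, (mlPartSum_singleton T x).symm⟩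

theorem MlOrthosym.mlSums_eq_singleton_zero [AddLeftMono E]
    {T : MultilinearMap ℝ (fun _ : Fin s => E) F} (hT : MlOrthosym T) {x : Fin s → E}
    (hx : ∀ i, 0 ≤ x i) {i j : Fin s} (hij : i ≠ j) (hd : x i ⊓ x j = 0) :
    mlSums T x = {0} := by
  refine Set.eq_singleton_iff_nonempty_unique_mem.2 ⟨⟨_, abs_apply_mem_mlSums T hx⟩, ?_⟩
  rintro y ⟨a, ha, rfl⟩
  refine Finset.sum_eq_zero fun k _ => ?_
  set v : Fin s → E := fun i => (a i).get (k i)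
  have hv_mem : ∀ i, v i ∈ a i := fun i => List.get_mem _ _
  have hv_nonneg : ∀ i, 0 ≤ v i := fun i => (ha i).1 _ (hv_mem i)
  have hv_le : ∀ i, v i ≤ x i := fun i => (ha i).le_of_mem (hv_mem i)
  have hv_disj : |v i| ⊓ |v j| = 0 := by
    rw [abs_of_nonneg (hv_nonneg i), abs_of_nonneg (hv_nonneg j)]
    exact inf_eq_zero_of_le_of_inf_eq_zero (hv_nonneg i) (hv_nonneg j) (hv_le i) (hv_le j) hd
  rw [hT v ⟨i, j, hij, hv_disj⟩, abs, neg_zero, sup_idem]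

theorem mlOrthosym_of_forall_nonneg [AddLeftMono E]
    {S : MultilinearMap ℝ (fun _ : Fin s => E) F}
    (hS : ∀ x : Fin s → E, (∀ i, 0 ≤ x i) → (∃ i j, i ≠ j ∧ x i ⊓ x j = 0) → S x = 0) :
    MlOrthosym S := by
  rintro v ⟨i, j, hij, hd⟩
  have hv : v = (fun k => (v k)⁺) + fun k => -(v k)⁻ := by
    funext k
    simp [← sub_eq_add_neg]
  rw [hv, MultilinearMap.map_add_univ]
  refine Finset.sum_eq_zero fun t _ => ?_
  set p : Fin s → E := fun k => if k ∈ t then (v k)⁺ else (v k)⁻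
  have hp_nonneg : ∀ k, 0 ≤ p k := fun k => by
    by_cases hk : k ∈ t <;> simp [p, hk, posPart_nonneg, negPart_nonneg]
  have hp_le : ∀ k, p k ≤ |v k| := fun k => by
    rw [← posPart_add_negPart]
    by_cases hk : k ∈ t <;> simp [p, hk]
  have hp_disj : p i ⊓ p j = 0 :=
    inf_eq_zero_of_le_of_inf_eq_zero (hp_nonneg i) (hp_nonneg j) (hp_le i) (hp_le j) hd
  have hpiece : t.piecewise (fun k => (v k)⁺) (fun k => -(v k)⁻) =
      fun k => (if k ∈ t then (1 : ℝ) else -1) • p k := by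
    funext k
    by_cases hk : k ∈ t <;> simp [p, hk]
  rw [hpiece, MultilinearMap.map_smul_univ, hS p hp_nonneg ⟨i, j, hij, hp_disj⟩, smul_zero]

end Modulus

theorem stmt12_general {E F : Type*} [AddCommGroup E] [Lattice E]
    [CovariantClass E E (· + ·) (· ≤ ·)] [Module ℝ E]
    [AddCommGroup F] [ConditionallyCompleteLattice F]
    [CovariantClass F F (· + ·) (· ≤ ·)] [Module ℝ F]
    (s : ℕ)
    (T : MultilinearMap ℝ (fun _ : Fin s => E) F)
    (hos : MlOrthosym T) :
    (∀ x : Fin s → E, (∀ i, 0 ≤ x i) → (∃ i j, i ≠ j ∧ x i ⊓ x j = 0) →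
      sSup (mlSums T x) = 0) ∧
    (∀ S : MultilinearMap ℝ (fun _ : Fin s => E) F, MlOBV S →
      (∀ x : Fin s → E, (∀ i, 0 ≤ x i) → sSup (mlSums S x) ≤ sSup (mlSums T x)) →
      MlOrthosym S) := by
  have hT_disj : ∀ x : Fin s → E, (∀ i, 0 ≤ x i) → (∃ i j, i ≠ j ∧ x i ⊓ x j = 0) →
      sSup (mlSums T x) = 0 := by
    rintro x hx ⟨i, j, hij, hd⟩
    rw [hos.mlSums_eq_singleton_zero hx hij hd, csSup_singleton]
  refine ⟨hT_disj, fun S hS hST => mlOrthosym_of_forall_nonneg fun x hx hd => ?_⟩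
  have habs : |S x| ≤ 0 := calc
    |S x| ≤ sSup (mlSums S x) := le_csSup (hS x hx) (abs_apply_mem_mlSums S hx)
    _ ≤ sSup (mlSums T x) := hST x hx
    _ = 0 := hT_disj x hx hd
  obtain ⟨hle, hneg⟩ := sup_le_iff.1 habs
  exact le_antisymm hle (neg_nonpos.1 hneg)

/-- If `T` is an orthosymmetric s-linear map of order bounded variation into a Dedekind
complete vector lattice, then its modulus `|T|` (given on positive tuples by the supremum
of partition sums) is orthosymmetric; consequently the orthosymmetric maps of order
bounded variation form an ideal: any `S` of order bounded variation with `|S| ≤ |T|`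
is again orthosymmetric. -/
theorem stmt12 {E F : Type*} [AddCommGroup E] [Lattice E]
    [CovariantClass E E (· + ·) (· ≤ ·)] [Module ℝ E]
    [AddCommGroup F] [ConditionallyCompleteLattice F]
    [CovariantClass F F (· + ·) (· ≤ ·)] [Module ℝ F]
    (s : ℕ) (hs : 2 ≤ s)
    (T : MultilinearMap ℝ (fun _ : Fin s => E) F)
    (hT : MlOBV T) (hos : MlOrthosym T) :
    (∀ x : Fin s → E, (∀ i, 0 ≤ x i) → (∃ i j, i ≠ j ∧ x i ⊓ x j = 0) →
      sSup (mlSums T x) = 0) ∧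
    (∀ S : MultilinearMap ℝ (fun _ : Fin s => E) F, MlOBV S →
      (∀ x : Fin s → E, (∀ i, 0 ≤ x i) → sSup (mlSums S x) ≤ sSup (mlSums T x)) →
      MlOrthosym S) :=
  stmt12_general s T hos
end

section
/- Let E be a vector lattice and V a vector space, and let P : E → V be an s-homogeneous polynomial (s ≥ 2) whose generating symmetric s-linear map is orthosymmetric. Then for x, y ∈ E with x ⊥ y and any z ∈ E, Σ_{k=1}^{s} C(s,k) T(x,...,x,y+z,...,y+z) = Σ_{k=1}^{s} C(s,k) T(x,...,x,z,...,z), where x appears k times in each term. -/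
/-!
For `k ≥ 1` the two sums agree term by term. Put `x` in the first `k` slots and `z` in the others,
then add `y` to the `z`-slots one at a time: by multilinearity each step adds a value of `T` at a
tuple having `x` in slot `0` and `y` in another slot, and orthosymmetry kills it since `x ⊥ y`.
-/

open Function

namespace MultilinearMap

variable {R ι M N : Type*} [CommSemiring R] [AddCommMonoid M] [AddCommMonoid N] [Module R M]
  [Module R N] [DecidableEq ι]

theorem map_piecewise_add_eq_of_map_update_eq_zero
    (T : MultilinearMap R (fun _ : ι => M) N) (v : ι → M) (b : M) (A : Finset ι)
    (hvanish : ∀ u : ι → M, (∀ i ∉ A, u i = v i) → ∀ j ∈ A, T (update u j b) = 0) :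
    T (A.piecewise (fun i => v i + b) v) = T v := by
  induction A using Finset.induction with
  | empty => rw [Finset.piecewise_empty]
  | @insert j A hj ih =>
    set u := A.piecewise (fun i => v i + b) v
    have hu : ∀ i ∉ insert j A, u i = v i := fun i hi =>
      Finset.piecewise_eq_of_notMem _ _ _ (fun h => hi (Finset.mem_insert_of_mem h))
    have hvj : update u j (v j) = u := by
      rw [← A.piecewise_eq_of_notMem (fun i => v i + b) v hj, update_eq_self]
    rw [Finset.piecewise_insert, T.map_update_add, hvj,
      hvanish u hu j (Finset.mem_insert_self j A), add_zero]
    exact ih fun w hw j' hj' =>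
      hvanish w (fun i hi => hw i fun h => hi (Finset.mem_insert_of_mem h)) j'
        (Finset.mem_insert_of_mem hj')

end MultilinearMap

theorem MultilinearMap.apply_ite_add_eq_of_orthosymmetric {E V : Type*} [AddCommGroup E] [Lattice E]
    [Module ℝ E] [AddCommGroup V] [Module ℝ V] {s : ℕ} (T : MultilinearMap ℝ (fun _ : Fin s => E) V)
    (hos : ∀ v : Fin s → E, (∃ i j, i ≠ j ∧ |v i| ⊓ |v j| = 0) → T v = 0)
    {x y : E} (hxy : |x| ⊓ |y| = 0) (z : E) {k : ℕ} (hk : 1 ≤ k) (hks : k ≤ s) :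
    T (fun i : Fin s => if (i : ℕ) < k then x else y + z) =
      T (fun i : Fin s => if (i : ℕ) < k then x else z) := by
  set v : Fin s → E := fun i => if (i : ℕ) < k then x else z
  let i₀ : Fin s := ⟨0, by omega⟩
  have hpiecewise : (fun i : Fin s => if (i : ℕ) < k then x else y + z) =
      ({i | ¬(i : ℕ) < k} : Finset (Fin s)).piecewise (fun i => v i + y) v := by
    funext i
    by_cases hi : (i : ℕ) < k <;> simp [Finset.piecewise, v, hi, add_comm]
  rw [hpiecewise]
  refine T.map_piecewise_add_eq_of_map_update_eq_zero v y _ fun u hu j hj => hos _ ⟨i₀, j, ?_⟩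
  have hj : ¬(j : ℕ) < k := by simpa using hj
  have hj₀ : i₀ ≠ j := fun h => hj (h ▸ hk)
  have hu₀ : u i₀ = x := (hu i₀ (by simp [i₀]; omega)).trans (if_pos (by simp [i₀]; omega))
  rw [update_of_ne hj₀, update_self, hu₀]
  exact ⟨hj₀, hxy⟩

theorem stmt18_general {E V : Type*} [AddCommGroup E] [Lattice E]
    [Module ℝ E]
    [AddCommGroup V] [Module ℝ V] (s : ℕ)
    (T : MultilinearMap ℝ (fun _ : Fin s => E) V)
    (hos : ∀ v : Fin s → E, (∃ i j, i ≠ j ∧ |v i| ⊓ |v j| = 0) → T v = 0)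
    (x y z : E) (hxy : |x| ⊓ |y| = 0) :
    ∑ k ∈ Finset.Icc 1 s,
        (s.choose k) • T (fun i : Fin s => if (i : ℕ) < k then x else y + z) =
    ∑ k ∈ Finset.Icc 1 s,
        (s.choose k) • T (fun i : Fin s => if (i : ℕ) < k then x else z) := by
  refine Finset.sum_congr rfl fun k hk => ?_
  obtain ⟨hk, hks⟩ := Finset.mem_Icc.mp hk
  rw [T.apply_ite_add_eq_of_orthosymmetric hos hxy z hk hks]

/-- If the symmetric generating s-linear map `T` of `P` is orthosymmetric and `x ⊥ y`,
then `Σ_{k=1}^s C(s,k) T(x,…,x,y+z,…,y+z) = Σ_{k=1}^s C(s,k) T(x,…,x,z,…,z)`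
(with `x` appearing `k` times in each term). -/
theorem stmt18 {E V : Type*} [AddCommGroup E] [Lattice E]
    [CovariantClass E E (· + ·) (· ≤ ·)] [Module ℝ E]
    [AddCommGroup V] [Module ℝ V] (s : ℕ) (hs : 2 ≤ s)
    (T : MultilinearMap ℝ (fun _ : Fin s => E) V)
    (hsymm : ∀ (v : Fin s → E) (σ : Equiv.Perm (Fin s)), T (v ∘ σ) = T v)
    (hos : ∀ v : Fin s → E, (∃ i j, i ≠ j ∧ |v i| ⊓ |v j| = 0) → T v = 0)
    (x y z : E) (hxy : |x| ⊓ |y| = 0) :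
    ∑ k ∈ Finset.Icc 1 s,
        (s.choose k) • T (fun i : Fin s => if (i : ℕ) < k then x else y + z) =
    ∑ k ∈ Finset.Icc 1 s,
        (s.choose k) • T (fun i : Fin s => if (i : ℕ) < k then x else z) :=
  stmt18_general s T hos x y z hxy
end
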